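/- arXiv:math/9807057 — 3 statements merged into one kernel-verified Lean document; each statement's English description precedes it below -/
import Mathlib

section
/- Let n be a positive integer. The family of bounded operators (π(x,y))_{(x,y) ∈ ℝ^{2n}} on L²(ℝⁿ) is linearly independent over ℂ; that is, if c : ℝ^{2n} → ℂ is finitely supported and Σ_{(x,y)} c(x,y)·π(x,y) = 0 in B(L²(ℝⁿ)), then c is identically zero. -/
set_option maxHeartbeats 1000000
set_option synthInstance.maxHeartbeats 1000000

open MeasureTheory Complex

noncomputable section

abbrev RV (n : ℕ) := Fin n → ℝ

abbrev L2 (n : ℕ) := Lp ℂ 2 (volume : Measure (RV n))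

/-- The dot product on `ℝⁿ`. -/
def dotR {n : ℕ} (x y : RV n) : ℝ := ∑ i, x i * y i

/-- The function `t ↦ e^{2πi y·t} f(t+x)`. -/
def tfsFun {n : ℕ} (x y : RV n) (f : RV n → ℂ) : RV n → ℂ :=
  fun t => Complex.exp (((2 * Real.pi * dotR y t : ℝ) : ℂ) * Complex.I) * f (t + x)

lemma memLp_tfsFun {n : ℕ} (x y : RV n) (f : L2 n) :
    MemLp (tfsFun x y (f : RV n → ℂ)) 2 (volume : Measure (RV n)) := by
  have hmp : MeasurePreserving (fun t : RV n => t + x) volume volume :=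
    measurePreserving_add_right volume x
  have h1 : MemLp (fun t : RV n => (f : RV n → ℂ) (t + x)) 2 volume :=
    (Lp.memLp f).comp_measurePreserving hmp
  have hcont : Continuous fun t : RV n =>
      Complex.exp (((2 * Real.pi * dotR y t : ℝ) : ℂ) * Complex.I) := by
    unfold dotR
    fun_prop
  refine MemLp.of_le h1 (hcont.aestronglyMeasurable.mul h1.1) ?_
  filter_upwards with t
  simp only [tfsFun, norm_mul]
  rw [Complex.norm_exp_ofReal_mul_I, one_mul]
lemma tfsFun_congr {n : ℕ} (x y : RV n) {f g : RV n → ℂ}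
    (h : f =ᵐ[(volume : Measure (RV n))] g) :
    tfsFun x y f =ᵐ[(volume : Measure (RV n))] tfsFun x y g := by
  have hmp : MeasurePreserving (fun t : RV n => t + x) volume volume :=
    measurePreserving_add_right volume x
  have h2 := hmp.quasiMeasurePreserving.ae_eq_comp h
  filter_upwards [h2] with t ht
  simp only [Function.comp] at ht
  simp [tfsFun, ht]

/-- The time-frequency shift `π(x,y)` as a bounded operator on `L²(ℝⁿ)`:
`(π(x,y)f)(t) = e^{2πi y·t} f(t+x)`. -/
def TFS {n : ℕ} (x y : RV n) : L2 n →L[ℂ] L2 n :=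
  LinearMap.mkContinuous
    { toFun := fun f => (memLp_tfsFun x y f).toLp _
      map_add' := fun f g => by
        apply Lp.ext
        have h6 := tfsFun_congr x y (Lp.coeFn_add f g)
        filter_upwards [(memLp_tfsFun x y (f + g)).coeFn_toLp, h6,
          Lp.coeFn_add ((memLp_tfsFun x y f).toLp _) ((memLp_tfsFun x y g).toLp _),
          (memLp_tfsFun x y f).coeFn_toLp, (memLp_tfsFun x y g).coeFn_toLp]
          with t e1 e6 e4 e2 e3
        rw [e1, e6, e4, Pi.add_apply, e2, e3]
        simp [tfsFun, mul_add]
      map_smul' := fun c f => by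
        apply Lp.ext
        have h6 := tfsFun_congr x y (Lp.coeFn_smul c f)
        filter_upwards [(memLp_tfsFun x y (c • f)).coeFn_toLp, h6,
          Lp.coeFn_smul c ((memLp_tfsFun x y f).toLp _),
          (memLp_tfsFun x y f).coeFn_toLp]
          with t e1 e6 e4 e2
        simp only [RingHom.id_apply]
        rw [e1, e6, e4, Pi.smul_apply, e2]
        simp [tfsFun]
        ring }
    1
    (fun f => by
      have hmp : MeasurePreserving (fun t : RV n => t + x) volume volume :=
        measurePreserving_add_right volume x
      simp only [LinearMap.coe_mk, AddHom.coe_mk, one_mul]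
      rw [Lp.norm_toLp _ (memLp_tfsFun x y f), Lp.norm_def]
      refine ENNReal.toReal_mono (Lp.eLpNorm_ne_top f) ?_
      have h1 : eLpNorm (tfsFun x y (f : RV n → ℂ)) 2 volume
          ≤ eLpNorm (((f : RV n → ℂ)) ∘ (fun t => t + x)) 2 volume := by
        refine eLpNorm_mono_ae ?_
        filter_upwards with t
        simp only [tfsFun, norm_mul, Function.comp]
        rw [Complex.norm_exp_ofReal_mul_I, one_mul]
      refine h1.trans ?_
      rw [eLpNorm_comp_measurePreserving (Lp.aestronglyMeasurable f) hmp])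

/-- `π(g)` for `g = (x,y) ∈ ℝ²ⁿ`. -/
def TFSp {n : ℕ} (g : RV n × RV n) : L2 n →L[ℂ] L2 n := TFS g.1 g.2

lemma TFS_coeFn {n : ℕ} (x y : RV n) (f : L2 n) :
    (TFS x y f : RV n → ℂ) =ᵐ[(volume : Measure (RV n))] tfsFun x y (f : RV n → ℂ) :=
  (memLp_tfsFun x y f).coeFn_toLp

lemma dotR_comm {n : ℕ} (x y : RV n) : dotR x y = dotR y x := by
  simp [dotR, mul_comm]

lemma dotR_add_right {n : ℕ} (y t a : RV n) : dotR y (t + a) = dotR y t + dotR y a := by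
  simp [dotR, mul_add, Finset.sum_add_distrib]

lemma dotR_add_left {n : ℕ} (b d t : RV n) : dotR (b + d) t = dotR b t + dotR d t := by
  simp [dotR, add_mul, Finset.sum_add_distrib]

lemma TFS_one {n : ℕ} : TFS (0 : RV n) (0 : RV n) = 1 := by
  refine ContinuousLinearMap.ext fun f => ?_
  apply Lp.ext
  filter_upwards [TFS_coeFn (0 : RV n) 0 f] with t ht
  rw [ht]
  simp [tfsFun, dotR]

lemma TFS_mul {n : ℕ} (a b c d : RV n) :
    TFS a b * TFS c d
      = Complex.exp (((2 * Real.pi * dotR a d : ℝ) : ℂ) * Complex.I) • TFS (a + c) (b + d) := by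
  refine ContinuousLinearMap.ext fun f => ?_
  apply Lp.ext
  have h1 := TFS_coeFn a b (TFS c d f)
  have h2 := tfsFun_congr a b (TFS_coeFn c d f)
  have h3 := Lp.coeFn_smul (Complex.exp (((2 * Real.pi * dotR a d : ℝ) : ℂ) * Complex.I))
    (TFS (a + c) (b + d) f)
  filter_upwards [h1, h2, h3, TFS_coeFn (a + c) (b + d) f] with t e1 e2 e3 e4
  show (TFS a b) ((TFS c d) f) t = _
  rw [ContinuousLinearMap.smul_apply, e1, e2, e3, Pi.smul_apply, e4]
  simp only [tfsFun, smul_eq_mul]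
  rw [add_assoc, ← mul_assoc, ← mul_assoc, ← Complex.exp_add, ← Complex.exp_add]
  congr 2
  rw [← add_mul, ← add_mul]
  congr 1
  push_cast
  rw [dotR_add_right, dotR_add_left, dotR_comm a d]
  push_cast
  ring

lemma TFSp_mul {n : ℕ} (g h : RV n × RV n) :
    TFSp g * TFSp h
      = Complex.exp (((2 * Real.pi * dotR g.1 h.2 : ℝ) : ℂ) * Complex.I) • TFSp (g + h) :=
  TFS_mul g.1 g.2 h.1 h.2

/-- The linear span of the `π(g)`, `g ∈ G`, inside `B(L²(ℝⁿ))`, as a `ℂ`-submodule. -/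
def spanTFS (n : ℕ) (G : AddSubgroup (RV n × RV n)) : Submodule ℂ (L2 n →L[ℂ] L2 n) :=
  Submodule.span ℂ (Set.range fun g : G => TFSp (g : RV n × RV n))

lemma one_mem_spanTFS (n : ℕ) (G : AddSubgroup (RV n × RV n)) :
    (1 : L2 n →L[ℂ] L2 n) ∈ spanTFS n G := by
  refine Submodule.subset_span ⟨0, ?_⟩
  show TFSp ((0 : RV n × RV n)) = 1
  exact TFS_one

lemma mul_mem_spanTFS {n : ℕ} {G : AddSubgroup (RV n × RV n)}
    {x y : L2 n →L[ℂ] L2 n} (hx : x ∈ spanTFS n G) (hy : y ∈ spanTFS n G) :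
    x * y ∈ spanTFS n G := by
  have h : spanTFS n G * spanTFS n G ≤ spanTFS n G := by
    rw [spanTFS, Submodule.span_mul_span]
    refine Submodule.span_le.2 ?_
    rintro z ⟨u, ⟨g, rfl⟩, v, ⟨k, rfl⟩, rfl⟩
    show TFSp (g : RV n × RV n) * TFSp (k : RV n × RV n) ∈ _
    rw [TFSp_mul]
    refine Submodule.smul_mem _ _ (Submodule.subset_span ⟨g + k, ?_⟩)
    norm_cast
  exact h (Submodule.mul_mem_mul hx hy)

/-- `ℂ*G`: the linear span of the `π(g)`, `g ∈ G`, as a subalgebra of `B(L²(ℝⁿ))`. -/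
def CGalg (n : ℕ) (G : AddSubgroup (RV n × RV n)) : Subalgebra ℂ (L2 n →L[ℂ] L2 n) :=
  (spanTFS n G).toSubalgebra (one_mem_spanTFS n G) (fun _ _ => mul_mem_spanTFS)

/-- `W*G`: the von Neumann algebra generated by `ℂ*G`, realized as the double
commutant of `ℂ*G` in `B(L²(ℝⁿ))`. -/
def WstarAlg (n : ℕ) (G : AddSubgroup (RV n × RV n)) : Subalgebra ℂ (L2 n →L[ℂ] L2 n) :=
  Subalgebra.centralizer ℂ
    ((Subalgebra.centralizer ℂ ((spanTFS n G : Set (L2 n →L[ℂ] L2 n)))) :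
      Set (L2 n →L[ℂ] L2 n))

lemma TFSp_mem_WstarAlg {n : ℕ} {G : AddSubgroup (RV n × RV n)} (g : G) :
    TFSp (g : RV n × RV n) ∈ WstarAlg n G := by
  rw [WstarAlg, Subalgebra.mem_centralizer_iff]
  intro c hc
  rw [SetLike.mem_coe, Subalgebra.mem_centralizer_iff] at hc
  exact (hc _ (Submodule.subset_span ⟨g, rfl⟩)).symm

/-!
Fix a translation `x₀` and apply `∑ c(x,y) π(x,y) = 0` to the indicator of a ball `B(t₀ + x₀, ε)`,
where `2ε` is less than the distance from `x₀` to every other translation occurring in `c`. For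
`t ∈ B(t₀, ε)` the point `t + x` lies in that ball only when `x = x₀`, so almost everywhere on
`B(t₀, ε)` the identity reads `∑_y c(x₀,y) e^{2πi y·t} = 0`. The left side is continuous, hence
vanishes at `t₀`, and `t₀` is arbitrary; Dedekind's independence of the distinct characters
`t ↦ e^{2πi y·t}` then forces `c(x₀, ·) = 0`.
-/

lemma linearIndependent_addChar (A L : Type*) [AddMonoid A] [CommRing L] [IsDomain L] :
    LinearIndependent L (fun ψ : AddChar A L => (ψ : A → L)) :=
  (linearIndependent_monoidHom (Multiplicative A) L).comp AddChar.toMonoidHom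
    AddChar.toMonoidHomEquiv.injective

lemma Metric.exists_pos_le_dist_of_finite {X : Type*} [MetricSpace X] {s : Set X}
    (hs : s.Finite) (x₀ : X) : ∃ r > 0, ∀ x ∈ s, x ≠ x₀ → r ≤ dist x x₀ := by
  obtain ⟨r, hr, hball⟩ :=
    Metric.isOpen_iff.mp (hs.sdiff (t := {x₀})).isClosed.isOpen_compl x₀ (by simp)
  exact ⟨r, hr, fun x hx hne => not_lt.mp fun hlt => hball (Metric.mem_ball.mpr hlt) ⟨hx, hne⟩⟩

lemma Finsupp.sum_ite_fst_eq_sum_curry {α β M N : Type*} [DecidableEq α] [Zero M]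
    [AddCommMonoid N] (c : α × β →₀ M) (a : α) (g : β → M → N) :
    (c.sum fun p m => if p.1 = a then g p.2 m else 0) = (c.curry a).sum g := by
  rw [← Finsupp.sum_curry_index c fun x y m => if x = a then g y m else 0]
  have hfibre (x : α) (f : β →₀ M) :
      (f.sum fun y m => if x = a then g y m else 0) = if x = a then f.sum g else 0 := by
    split_ifs <;> simp
  simp only [hfibre, Finsupp.sum_ite_eq']
  split_ifs with ha
  · rfl
  · rw [Finsupp.notMem_support_iff.mp ha, Finsupp.sum_zero_index]

section TimeFrequencyShift

open Metric FourierTransform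

variable {n : ℕ}

lemma dotR_eq_dotProduct (x y : RV n) : dotR x y = x ⬝ᵥ y := rfl

def dotChar (y : RV n) : AddChar (RV n) ℂ where
  toFun t := 𝐞 (dotR y t)
  map_zero_eq_one' := by simp [dotR]
  map_add_eq_mul' s t := by rw [dotR_add_right, AddChar.map_add_eq_mul, Circle.coe_mul]

lemma continuous_dotChar (y : RV n) : Continuous (dotChar y) := by
  change Continuous fun t => ((𝐞 (dotR y t) : Circle) : ℂ)
  unfold dotR
  fun_prop

lemma dotChar_injective : Function.Injective (dotChar (n := n)) := by
  intro y y' hyy'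
  by_contra hne
  obtain ⟨s, hs⟩ : ∃ s, 𝐞 s ≠ 1 := by simpa [DFunLike.ne_iff] using Real.fourierChar_ne_one
  set d := y - y'
  have hd : d ⬝ᵥ d ≠ 0 := dotProduct_self_eq_zero.not.mpr (sub_ne_zero.mpr hne)
  set t := (s / (d ⬝ᵥ d)) • d
  have hdt : d ⬝ᵥ t = s := by rw [dotProduct_smul, smul_eq_mul, div_mul_cancel₀ s hd]
  have hyt : dotR y t = dotR y' t + s := by
    rw [← hdt, dotR_eq_dotProduct, dotR_eq_dotProduct, ← add_dotProduct, add_sub_cancel]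
  have hchar : 𝐞 (dotR y t) = 𝐞 (dotR y' t) := Circle.coe_inj.mp (DFunLike.congr_fun hyy' t)
  rw [hyt, AddChar.map_add_eq_mul, mul_eq_left] at hchar
  exact hs hchar

lemma linearIndependent_dotChar : LinearIndependent ℂ (fun y : RV n => ⇑(dotChar y)) :=
  (linearIndependent_addChar (RV n) ℂ).comp dotChar dotChar_injective

lemma tfsFun_indicator_ball_of_mem {x y q t : RV n} {ε : ℝ} (ht : t ∈ ball q ε) :
    tfsFun x y ((ball (q + x) ε).indicator fun _ => 1) t = dotChar y t := by
  rw [tfsFun, Set.indicator_of_mem (by rwa [mem_ball, dist_add_right]), mul_one]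
  rfl

lemma tfsFun_indicator_ball_of_le_dist {x x₀ y q t : RV n} {ε : ℝ} (ht : t ∈ ball q ε)
    (hx : 2 * ε ≤ dist x x₀) :
    tfsFun x y ((ball (q + x₀) ε).indicator fun _ => 1) t = 0 := by
  refine mul_eq_zero_of_right _ (Set.indicator_of_notMem (fun hmem => ?_) _)
  have : dist x x₀ ≤ dist (t + x) (q + x₀) + dist q t := by
    calc dist x x₀ = dist (t + x) (t + x₀) := (dist_add_left t x x₀).symm
      _ ≤ dist (t + x) (q + x₀) + dist (q + x₀) (t + x₀) := dist_triangle _ _ _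
      _ = dist (t + x) (q + x₀) + dist q t := by rw [dist_add_right]
  rw [mem_ball] at ht hmem
  rw [dist_comm] at ht
  linarith

lemma coeFn_sum_smul_TFSp_apply (c : (RV n × RV n) →₀ ℂ) {f : L2 n} {φ : RV n → ℂ}
    (hf : f =ᵐ[volume] φ) :
    (c.sum fun g a => a • TFSp g) f =ᵐ[volume]
      fun t => c.sum fun g a => a * tfsFun g.1 g.2 φ t := by
  have hterm (g : RV n × RV n) :
      ⇑(c g • TFSp g f) =ᵐ[volume] fun t => c g * tfsFun g.1 g.2 φ t := by
    filter_upwards [Lp.coeFn_smul (c g) (TFSp g f), TFS_coeFn g.1 g.2 f,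
      tfsFun_congr g.1 g.2 hf] with t h₁ h₂ h₃
    rw [h₁, Pi.smul_apply, smul_eq_mul, TFSp, h₂, h₃]
  simp only [Finsupp.sum, sum_apply, smul_apply]
  filter_upwards [Lp.coeFn_fun_finsetSum c.support fun g => c g • TFSp g f,
    (Filter.eventually_all_finset c.support).2 fun g _ => hterm g] with t h₁ h₂
  rw [h₁]
  exact Finset.sum_congr rfl h₂

lemma linearCombination_dotChar_curry_eq_zero {c : (RV n × RV n) →₀ ℂ}
    (h : (c.sum fun g a => a • TFSp g) = 0) (x₀ : RV n) :
    Finsupp.linearCombination ℂ (fun y => ⇑(dotChar y)) (c.curry x₀) = 0 := by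
  classical
  obtain ⟨r, hr, hsep⟩ := exists_pos_le_dist_of_finite (c.support.image Prod.fst).finite_toSet x₀
  have hF : Continuous (Finsupp.linearCombination ℂ (fun y => ⇑(dotChar y)) (c.curry x₀)) := by
    rw [Finsupp.linearCombination_apply]
    simp only [Finsupp.sum, Finset.sum_fn]
    exact continuous_finsetSum _ fun y _ => (continuous_dotChar y).const_smul _
  funext t₀
  refine Measure.eqOn_open_of_ae_eq (μ := volume) ?_ isOpen_ball hF.continuousOn continuousOn_const
    (mem_ball_self (half_pos hr))
  have hB : volume (ball (t₀ + x₀) (r / 2)) ≠ ⊤ := measure_ball_lt_top.ne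
  have hsum := coeFn_sum_smul_TFSp_apply c
    (indicatorConstLp_coeFn (hs := measurableSet_ball) (hμs := hB) (c := (1 : ℂ)))
  rw [h, zero_apply] at hsum
  rw [Filter.EventuallyEq, ae_restrict_iff' measurableSet_ball]
  filter_upwards [hsum, Lp.coeFn_zero ℂ 2 (volume : Measure (RV n))] with t h₁ h₂ ht
  calc Finsupp.linearCombination ℂ (fun y => ⇑(dotChar y)) (c.curry x₀) t
      = (c.curry x₀).sum fun y a => a * dotChar y t := by
        simp only [Finsupp.linearCombination_apply, Finsupp.sum, Finset.sum_apply, Pi.smul_apply,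
          smul_eq_mul]
    _ = c.sum fun g a => if g.1 = x₀ then a * dotChar g.2 t else 0 :=
        (Finsupp.sum_ite_fst_eq_sum_curry c x₀ _).symm
    _ = c.sum fun g a => a * tfsFun g.1 g.2 ((ball (t₀ + x₀) (r / 2)).indicator fun _ => 1) t := by
        refine Finsupp.sum_congr fun g hg => ?_
        split_ifs with hx
        · rw [← hx, tfsFun_indicator_ball_of_mem ht]
        · have := hsep g.1 (Finset.mem_image_of_mem _ hg) hx
          rw [tfsFun_indicator_ball_of_le_dist ht (by linarith), mul_zero]
    _ = 0 := by rw [← h₁, h₂]; rfl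

end TimeFrequencyShift

theorem statement4_general (n : ℕ) (c : (RV n × RV n) →₀ ℂ)
    (h : (c.sum fun g a => a • TFSp g) = 0) : c = 0 := by
  ext ⟨x, y⟩
  have hfibre : c.curry x = 0 :=
    linearIndependent_iff.mp linearIndependent_dotChar _
      (linearCombination_dotChar_curry_eq_zero h x)
  simpa using DFunLike.congr_fun hfibre y

/-- The family of operators `(π(x,y))_{(x,y) ∈ ℝ²ⁿ}` is linearly independent:
if `c` is finitely supported and `Σ c(x,y) • π(x,y) = 0`, then `c = 0`. -/
theorem statement4 (n : ℕ) (hn : 0 < n) (c : (RV n × RV n) →₀ ℂ)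
    (h : (c.sum fun g a => a • TFSp g) = 0) : c = 0 :=
  statement4_general n c h

end
end

section
/- Let n be a positive integer and let G be any subgroup of ℝ^{2n}. Then ℂ*G is a domain: if α, β ∈ ℂ*G and αβ = 0 in B(L²(ℝⁿ)), then α = 0 or β = 0. -/
set_option maxHeartbeats 1000000
set_option synthInstance.maxHeartbeats 1000000

open MeasureTheory Complex

noncomputable section

/-!
Conjugation by `π(z)` multiplies `π(s)` by the character `z ↦ e^{2πi ω(z,s)}`, where `ω` is the
standard symplectic form on `ℝ²ⁿ`. Since `ω` is nondegenerate these characters are pairwise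
distinct, so Dedekind's lemma makes the `π(s)`, `s ∈ ℝ²ⁿ`, linearly independent in `B(L²(ℝⁿ))`.
A product of two elements of `ℂ*G` expands as a combination of the `π(a + b)`; as `ℝ²ⁿ` is a
`ℚ`-vector space it has unique sums, so for some `a₀` and `b₀` in the two supports the
shift `π(a₀ + b₀)` comes from the single pair `(a₀, b₀)` and its coefficient cannot vanish.
-/

open scoped FourierTransform

theorem linearIndependent_addChar_s6 (G K : Type*) [AddMonoid G] [CommRing K] [IsDomain K] :
    LinearIndependent K ((⇑) : AddChar G K → G → K) :=
  LinearIndependent.of_comp (LinearMap.funLeft K K Multiplicative.toAdd)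
    ((linearIndependent_monoidHom (Multiplicative G) K).comp AddChar.toMonoidHom
      AddChar.toMonoidHomEquiv.injective)

theorem linearIndependent_of_forall_apply_eq_smul {ι M K V : Type*} [Field K] [AddCommGroup V]
    [Module K V] {T : ι → V} (hT : ∀ i, T i ≠ 0) {χ : ι → M → K}
    (hχ : LinearIndependent K χ) (Φ : M → V →ₗ[K] V) (hΦ : ∀ m i, Φ m (T i) = χ i m • T i) :
    LinearIndependent K T := by
  rw [linearIndependent_iff'] at hχ ⊢
  intro s g hg i hi
  obtain ⟨ℓ, hℓ⟩ := Module.Projective.exists_dual_ne_zero K (hT i)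
  have hcomb : ∑ j ∈ s, (g j * ℓ (T j)) • χ j = 0 := by
    funext m
    simpa [map_sum, hΦ, mul_comm, mul_left_comm] using congrArg (fun v => ℓ (Φ m v)) hg
  exact (mul_eq_zero.1 (hχ s _ hcomb i hi)).resolve_right hℓ

theorem LinearIndependent.sum_sum_smul_add_ne_zero {ι K V : Type*} [Semiring K]
    [AddCommMonoid V] [Module K V] [Add ι] [UniqueSums ι] {T : ι → V}
    (hT : LinearIndependent K T) {A B : Finset ι} (hA : A.Nonempty) (hB : B.Nonempty)
    {k : ι → ι → K} (hk : ∀ a ∈ A, ∀ b ∈ B, k a b ≠ 0) :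
    ∑ a ∈ A, ∑ b ∈ B, k a b • T (a + b) ≠ 0 := by
  classical
  obtain ⟨a₀, ha₀, b₀, hb₀, huniq⟩ := UniqueSums.uniqueAdd_of_nonempty hA hB
  set l : ι →₀ K := ∑ a ∈ A, ∑ b ∈ B, Finsupp.single (a + b) (k a b)
  have hl : Finsupp.linearCombination K T l = ∑ a ∈ A, ∑ b ∈ B, k a b • T (a + b) := by
    simp [l, map_sum]
  have hl₀ : l (a₀ + b₀) = k a₀ b₀ := by
    simp only [l, Finsupp.finsetSum_apply, Finsupp.single_apply, ← Finset.sum_product']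
    rw [Finset.sum_eq_single_of_mem (a₀, b₀) (Finset.mem_product.2 ⟨ha₀, hb₀⟩), if_pos rfl]
    rintro ⟨a, b⟩ hab hne
    exact if_neg fun h => hne (Prod.ext_iff.2 (huniq (Finset.mem_product.1 hab).1
      (Finset.mem_product.1 hab).2 h))
  rw [← hl]
  intro h0
  have : l = 0 := hT (h0.trans (map_zero _).symm)
  exact hk a₀ ha₀ b₀ hb₀ (by rw [← hl₀, this, Finsupp.coe_zero, Pi.zero_apply])

section SymplecticCharacters

variable {n : ℕ}

def symplecticForm : (RV n × RV n) →ₗ[ℝ] (RV n × RV n) →ₗ[ℝ] ℝ :=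
  LinearMap.mk₂ ℝ (fun z s => z.1 ⬝ᵥ s.2 - s.1 ⬝ᵥ z.2)
    (fun _ _ _ => by simp only [Prod.fst_add, Prod.snd_add, add_dotProduct, dotProduct_add]; ring)
    (fun _ _ _ => by
      simp only [Prod.smul_fst, Prod.smul_snd, smul_dotProduct, dotProduct_smul, smul_eq_mul]
      ring)
    (fun _ _ _ => by simp only [Prod.fst_add, Prod.snd_add, add_dotProduct, dotProduct_add]; ring)
    (fun _ _ _ => by
      simp only [Prod.smul_fst, Prod.smul_snd, smul_dotProduct, dotProduct_smul, smul_eq_mul]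
      ring)

lemma symplecticForm_apply (z s : RV n × RV n) :
    symplecticForm z s = z.1 ⬝ᵥ s.2 - s.1 ⬝ᵥ z.2 :=
  LinearMap.mk₂_apply ..

lemma symplecticForm_flip_ne_zero {u : RV n × RV n} (hu : u ≠ 0) :
    symplecticForm.flip u ≠ 0 := by
  intro h
  have h0 := LinearMap.congr_fun h (u.2, -u.1)
  simp only [LinearMap.flip_apply, symplecticForm_apply, dotProduct_neg, sub_neg_eq_add,
    LinearMap.zero_apply] at h0
  have hself (v : RV n) : 0 ≤ v ⬝ᵥ v := Finset.sum_nonneg fun i _ => mul_self_nonneg (v i)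
  rw [add_eq_zero_iff_of_nonneg (hself _) (hself _), dotProduct_self_eq_zero,
    dotProduct_self_eq_zero] at h0
  exact hu (Prod.ext h0.2 h0.1)

def symplecticChar (s : RV n × RV n) : AddChar (RV n × RV n) ℂ where
  toFun z := 𝐞 (symplecticForm z s)
  map_zero_eq_one' := by simp
  map_add_eq_mul' z w := by simp [AddChar.map_add_eq_mul]

lemma symplecticChar_apply (s z : RV n × RV n) :
    symplecticChar s z = 𝐞 (symplecticForm z s) := rfl

lemma symplecticChar_injective : Function.Injective (symplecticChar (n := n)) := by
  intro s s' h
  by_contra hne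
  apply Real.fourierChar_ne_one
  ext r
  obtain ⟨z, rfl⟩ := LinearMap.surjective (symplecticForm_flip_ne_zero (sub_ne_zero.2 hne)) r
  have hz : 𝐞 (symplecticForm z s) = 𝐞 (symplecticForm z s') :=
    Circle.coe_inj.1 (congrArg (fun χ : AddChar _ ℂ => χ z) h)
  simp [map_sub, AddChar.map_sub_eq_div, hz]

end SymplecticCharacters

section TimeFrequencyShifts

variable {n : ℕ}

lemma TFSp_mul_eq_fourierChar_smul (g h : RV n × RV n) :
    TFSp g * TFSp h = (𝐞 (g.1 ⬝ᵥ h.2) : ℂ) • TFSp (g + h) :=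
  TFSp_mul g h

lemma TFSp_zero : TFSp (0 : RV n × RV n) = 1 := TFS_one

instance : Nontrivial (L2 n) := by
  have hμ : 0 < volume (Metric.ball (0 : RV n) 1) := Metric.measure_ball_pos _ _ one_pos
  refine nontrivial_of_ne (indicatorConstLp 2 (s := Metric.ball (0 : RV n) 1) measurableSet_ball
    measure_ball_lt_top.ne (1 : ℂ)) 0 ?_
  rw [← norm_pos_iff, norm_indicatorConstLp' two_ne_zero hμ.ne', norm_one, one_mul]
  exact Real.rpow_pos_of_pos (ENNReal.toReal_pos hμ.ne' measure_ball_lt_top.ne) _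

lemma TFSp_ne_zero (s : RV n × RV n) : TFSp s ≠ 0 := by
  intro h
  have := TFSp_mul_eq_fourierChar_smul s (-s)
  rw [h, zero_mul, add_neg_cancel, TFSp_zero, eq_comm, smul_eq_zero] at this
  exact this.elim (Circle.coe_ne_zero _) one_ne_zero

/-- `𝐞 (z.1 ⬝ᵥ z.2) • TFSp (-z)` is the inverse of `TFSp z`, so the left-hand side is the
conjugate of `TFSp s` by `TFSp z`. -/
lemma TFSp_conj (z s : RV n × RV n) :
    TFSp z * TFSp s * ((𝐞 (z.1 ⬝ᵥ z.2) : ℂ) • TFSp (-z)) = symplecticChar s z • TFSp s := by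
  rw [mul_smul_comm, TFSp_mul_eq_fourierChar_smul, smul_mul_assoc,
    TFSp_mul_eq_fourierChar_smul, add_neg_cancel_comm, smul_smul, smul_smul,
    symplecticChar_apply]
  congr 1
  simp only [← Circle.coe_mul, ← AddChar.map_add_eq_mul]
  congr 2
  simp only [symplecticForm_apply, Prod.fst_add, Prod.snd_neg, add_dotProduct, dotProduct_neg]
  ring

theorem linearIndependent_TFSp : LinearIndependent ℂ (TFSp : RV n × RV n → L2 n →L[ℂ] L2 n) :=
  linearIndependent_of_forall_apply_eq_smul TFSp_ne_zero
    ((linearIndependent_addChar_s6 _ ℂ).comp _ symplecticChar_injective)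
    (fun z => LinearMap.mulLeft ℂ (TFSp z) ∘ₗ
      LinearMap.mulRight ℂ ((𝐞 (z.1 ⬝ᵥ z.2) : ℂ) • TFSp (-z)))
    (fun z s => by
      simp only [LinearMap.comp_apply, LinearMap.mulLeft_apply, LinearMap.mulRight_apply,
        ← mul_assoc]
      exact TFSp_conj z s)

end TimeFrequencyShifts

lemma sum_smul_TFSp_mul_sum_smul_TFSp {n : ℕ} (c d : (RV n × RV n) →₀ ℂ) :
    (c.sum fun a x => x • TFSp a) * (d.sum fun b y => y • TFSp b)
      = ∑ a ∈ c.support, ∑ b ∈ d.support, (c a * d b * 𝐞 (a.1 ⬝ᵥ b.2)) • TFSp (a + b) := by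
  simp only [Finsupp.sum, Finset.sum_mul_sum, smul_mul_smul_comm,
    TFSp_mul_eq_fourierChar_smul, smul_smul]

lemma exists_finsupp_of_mem_CGalg {n : ℕ} {G : AddSubgroup (RV n × RV n)}
    {α : L2 n →L[ℂ] L2 n} (hα : α ∈ CGalg n G) :
    ∃ c : (RV n × RV n) →₀ ℂ, (c.sum fun a x => x • TFSp a) = α :=
  Finsupp.mem_span_range_iff_exists_finsupp.1 <|
    Submodule.span_mono (Set.range_comp_subset_range Subtype.val TFSp) hα

theorem statement6_general (n : ℕ) (G : AddSubgroup (RV n × RV n))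
    (α β : L2 n →L[ℂ] L2 n) (hα : α ∈ CGalg n G) (hβ : β ∈ CGalg n G)
    (h : α * β = 0) : α = 0 ∨ β = 0 := by
  obtain ⟨c, rfl⟩ := exists_finsupp_of_mem_CGalg hα
  obtain ⟨d, rfl⟩ := exists_finsupp_of_mem_CGalg hβ
  by_contra! hne
  have hc : c.support.Nonempty := Finsupp.support_nonempty_iff.2 (by rintro rfl; simp at hne)
  have hd : d.support.Nonempty := Finsupp.support_nonempty_iff.2 (by rintro rfl; simp at hne)
  refine linearIndependent_TFSp.sum_sum_smul_add_ne_zero hc hd (fun a ha b hb => ?_)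
    (by rw [← sum_smul_TFSp_mul_sum_smul_TFSp, h])
  exact mul_ne_zero (mul_ne_zero (Finsupp.mem_support_iff.1 ha) (Finsupp.mem_support_iff.1 hb))
    (Circle.coe_ne_zero _)

/-- For any subgroup `G ≤ ℝ²ⁿ`, the ring `ℂ*G` is a domain. -/
theorem statement6 (n : ℕ) (hn : 0 < n) (G : AddSubgroup (RV n × RV n))
    (α β : L2 n →L[ℂ] L2 n) (hα : α ∈ CGalg n G) (hβ : β ∈ CGalg n G)
    (h : α * β = 0) : α = 0 ∨ β = 0 :=
  statement6_general n G α β hα hβ h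

end
end

section
/- Let n be a positive integer and let G be any subgroup of ℝ^{2n}. If I and J are nonzero left ideals of the ring ℂ*G, then I ∩ J ≠ 0. In particular, for any nonzero α, β ∈ ℂ*G there exist γ, δ ∈ ℂ*G such that γα = δβ ≠ 0 (the left Ore condition). -/
set_option maxHeartbeats 1000000
set_option synthInstance.maxHeartbeats 1000000

open MeasureTheory Complex

noncomputable section

/-!
The operators `π(g)` are linearly independent: testing a vanishing combination against the
indicator of a small ball isolates the shifts with one translation part, and what remains is a
vanishing combination of distinct characters. Since `π(g) π(h) = u(g, h) π(g + h)` with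
`u(g, h) ≠ 0`, this makes `ℂ*G` a twisted group algebra of `G`. In the torsion-free group `ℝ²ⁿ`
any two finite sets have a sum `g₀ + h₀` with a unique decomposition, so the coefficient of
`π(g₀ + h₀)` in a product of nonzero elements cannot vanish: `ℂ*G` has no zero divisors.
For the Ore condition let `S` contain the supports of `α` and `β`. The sumsets `m • S` grow
only polynomially, so `|(m + 1) • S| < 2 |m • S|` for some `m`; right multiplication by `α` and
by `β` embeds the span of `π(m • S)` into that of `π((m + 1) • S)`, and counting dimensions the
two images must meet outside `0`.
-/

section Sumsets

open Pointwise

lemma Finset.nsmul_subset_image_piFinset {α : Type*} [AddCommMonoid α] [DecidableEq α]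
    (S : Finset α) (m : ℕ) :
    m • S ⊆ (Fintype.piFinset fun _ : S => Finset.range (m + 1)).image
      fun k => ∑ s : S, k s • (s : α) := by
  induction m with
  | zero =>
    intro x hx
    rw [zero_nsmul, Finset.mem_zero] at hx
    exact Finset.mem_image.mpr ⟨fun _ => 0, by simp, by simp [hx]⟩
  | succ m ih =>
    rw [succ_nsmul]
    intro x hx
    obtain ⟨_, hy, t, ht, rfl⟩ := Finset.mem_add.mp hx
    obtain ⟨k, hk, rfl⟩ := Finset.mem_image.mp (ih hy)
    refine Finset.mem_image.mpr ⟨k + Pi.single ⟨t, ht⟩ 1, ?_, ?_⟩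
    · simp only [Fintype.mem_piFinset, Finset.mem_range] at hk ⊢
      intro s
      have := hk s
      rw [Pi.add_apply, Pi.single_apply]
      split_ifs <;> omega
    · simp [add_smul, Finset.sum_add_distrib, Pi.single_apply]

lemma Finset.card_nsmul_le_pow {α : Type*} [AddCommMonoid α] [DecidableEq α]
    (S : Finset α) (m : ℕ) : (m • S).card ≤ (m + 1) ^ S.card :=
  (Finset.card_le_card (S.nsmul_subset_image_piFinset m)).trans <|
    Finset.card_image_le.trans (by simp)

lemma exists_pow_lt_two_pow (k : ℕ) : ∃ m : ℕ, (m + 1) ^ k < 2 ^ m := by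
  have h := ((isLittleO_pow_const_const_pow_of_one_lt (R := ℝ) k one_lt_two).bound
    (by norm_num : (0 : ℝ) < 1 / 4))
  obtain ⟨m, hm⟩ := ((Filter.tendsto_add_atTop_nat 1).eventually h).exists
  refine ⟨m, ?_⟩
  simp only [Real.norm_eq_abs, abs_pow, Nat.abs_cast, abs_two] at hm
  push_cast at hm
  rw [pow_succ] at hm
  exact_mod_cast (show ((m : ℝ) + 1) ^ k < 2 ^ m by nlinarith [pow_pos two_pos (M₀ := ℝ) m])

lemma Finset.exists_card_succ_nsmul_lt_two_mul {α : Type*} [AddCommMonoid α] [DecidableEq α]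
    (S : Finset α) : ∃ m : ℕ, ((m + 1) • S).card < 2 * (m • S).card := by
  by_contra! hdoubling
  have hgrowth : ∀ m : ℕ, 2 ^ m ≤ (m • S).card := by
    intro m
    induction m with
    | zero => simp
    | succ m ih => rw [pow_succ]; linarith [hdoubling m]
  obtain ⟨m, hm⟩ := exists_pow_lt_two_pow S.card
  linarith [hgrowth m, S.card_nsmul_le_pow m]

end Sumsets

section TwistedGroupAlgebra

variable {K A Γ : Type*} [Field K] [Ring A] [Algebra K A] [Add Γ]

def twistedConv (u : Γ → Γ → K) (c d : Γ →₀ K) : Γ →₀ K :=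
  c.sum fun g a => d.sum fun h b => Finsupp.single (g + h) (a * b * u g h)

lemma linearCombination_twistedConv {e : Γ → A} {u : Γ → Γ → K}
    (he : ∀ g h, e g * e h = u g h • e (g + h)) (c d : Γ →₀ K) :
    Finsupp.linearCombination K e (twistedConv u c d)
      = Finsupp.linearCombination K e c * Finsupp.linearCombination K e d := by
  simp only [twistedConv, map_finsuppSum, Finsupp.linearCombination_single]
  rw [Finsupp.linearCombination_apply, Finsupp.linearCombination_apply, Finsupp.sum_mul]
  simp only [Finsupp.mul_sum, smul_mul_smul_comm, he, smul_smul]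

lemma twistedConv_apply_add_of_uniqueAdd (u : Γ → Γ → K) {c d : Γ →₀ K} {g₀ h₀ : Γ}
    (huniq : UniqueAdd c.support d.support g₀ h₀) :
    twistedConv u c d (g₀ + h₀) = c g₀ * d h₀ * u g₀ h₀ := by
  classical
  simp only [twistedConv, Finsupp.sum, Finsupp.finsetSum_apply, Finsupp.single_apply]
  rw [← Finset.sum_product' (f := fun g h => if g + h = g₀ + h₀ then c g * d h * u g h else 0),
    Finset.sum_eq_single (g₀, h₀)]
  · simp
  · rintro ⟨g, h⟩ hgh hne
    rw [Finset.mem_product] at hgh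
    exact if_neg fun heq => hne (Prod.ext_iff.mpr (huniq hgh.1 hgh.2 heq))
  · intro hgh
    rw [Finset.mem_product, not_and_or, Finsupp.notMem_support_iff, Finsupp.notMem_support_iff]
      at hgh
    rcases hgh with h | h <;> simp [h]

lemma twistedConv_ne_zero [UniqueSums Γ] {u : Γ → Γ → K} (hu : ∀ g h, u g h ≠ 0)
    {c d : Γ →₀ K} (hc : c ≠ 0) (hd : d ≠ 0) : twistedConv u c d ≠ 0 := by
  obtain ⟨g₀, hg₀, h₀, hh₀, huniq⟩ := UniqueSums.uniqueAdd_of_nonempty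
    (Finsupp.support_nonempty_iff.mpr hc) (Finsupp.support_nonempty_iff.mpr hd)
  refine Finsupp.ne_iff.mpr ⟨g₀ + h₀, ?_⟩
  rw [twistedConv_apply_add_of_uniqueAdd u huniq, Finsupp.coe_zero, Pi.zero_apply]
  exact mul_ne_zero (mul_ne_zero (Finsupp.mem_support_iff.mp hg₀)
    (Finsupp.mem_support_iff.mp hh₀)) (hu g₀ h₀)

lemma mul_ne_zero_of_mem_span [UniqueSums Γ] {e : Γ → A} {u : Γ → Γ → K} (hli : LinearIndependent K e)
    (he : ∀ g h, e g * e h = u g h • e (g + h)) (hu : ∀ g h, u g h ≠ 0) {x y : A}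
    (hx : x ∈ Submodule.span K (Set.range e)) (hy : y ∈ Submodule.span K (Set.range e))
    (hx₀ : x ≠ 0) (hy₀ : y ≠ 0) : x * y ≠ 0 := by
  rw [← Finsupp.range_linearCombination] at hx hy
  obtain ⟨c, rfl⟩ := hx
  obtain ⟨d, rfl⟩ := hy
  rw [← linearCombination_twistedConv he]
  refine (map_ne_zero_iff _ hli).mpr (twistedConv_ne_zero hu ?_ ?_)
  · rintro rfl
    exact hx₀ (map_zero _)
  · rintro rfl
    exact hy₀ (map_zero _)

end TwistedGroupAlgebra

lemma LinearMap.exists_apply_eq_apply_ne_zero_of_finrank_lt {K V W : Type*} [DivisionRing K]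
    [AddCommGroup V] [Module K V] [AddCommGroup W] [Module K W] [FiniteDimensional K W]
    {f g : V →ₗ[K] W} (hf : Function.Injective f) (hg : Function.Injective g)
    (hdim : Module.finrank K W < 2 * Module.finrank K V) :
    ∃ x y, f x = g y ∧ f x ≠ 0 := by
  by_contra! hcon
  have hdisj : Disjoint (LinearMap.range f) (LinearMap.range g) := by
    rw [Submodule.disjoint_def]
    rintro _ ⟨x, rfl⟩ ⟨y, hy⟩
    exact hcon x y hy.symm
  have := Submodule.finrank_add_finrank_le_of_disjoint hdisj
  rw [LinearMap.finrank_range_of_inj hf, LinearMap.finrank_range_of_inj hg] at this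
  omega

lemma LinearIndependent.finrank_span_image_finset {R M ι : Type*} [Ring R] [Nontrivial R]
    [StrongRankCondition R] [AddCommGroup M] [Module R M] {v : ι → M}
    (hv : LinearIndependent R v) (s : Finset ι) :
    Module.finrank R (Submodule.span R (v '' s)) = s.card := by
  rw [Set.image_eq_range, finrank_span_eq_card (b := fun i : (s : Set ι) => v i)
    (hv.comp _ Subtype.val_injective)]
  simp

section Ore

open Pointwise

variable {K A Γ : Type*} [Field K] [Ring A] [Algebra K A] [AddCommMonoid Γ]
  {e : Γ → A} {u : Γ → Γ → K}

lemma span_image_mul_span_image_le (he : ∀ g h, e g * e h = u g h • e (g + h)) (s t : Set Γ) :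
    Submodule.span K (e '' s) * Submodule.span K (e '' t) ≤ Submodule.span K (e '' (s + t)) := by
  rw [Submodule.span_mul_span, Submodule.span_le]
  rintro _ ⟨_, ⟨g, hg, rfl⟩, _, ⟨h, hh, rfl⟩, rfl⟩
  show e g * e h ∈ _
  rw [he]
  exact Submodule.smul_mem _ _ (Submodule.subset_span ⟨g + h, Set.add_mem_add hg hh, rfl⟩)

lemma exists_injective_mulRight_span_image [UniqueSums Γ] (hli : LinearIndependent K e)
    (he : ∀ g h, e g * e h = u g h • e (g + h)) (hu : ∀ g h, u g h ≠ 0) (s : Set Γ) {t : Set Γ}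
    {y : A} (hy : y ∈ Submodule.span K (e '' t)) (hy₀ : y ≠ 0) :
    ∃ φ : Submodule.span K (e '' s) →ₗ[K] Submodule.span K (e '' (s + t)),
      Function.Injective φ ∧ ∀ x, (φ x : A) = x * y := by
  have hmaps : ∀ x ∈ Submodule.span K (e '' s),
      LinearMap.mulRight K y x ∈ Submodule.span K (e '' (s + t)) :=
    fun x hx => span_image_mul_span_image_le he s t (Submodule.mul_mem_mul hx hy)
  refine ⟨(LinearMap.mulRight K y).restrict hmaps,
    (injective_iff_map_eq_zero _).mpr fun x hx => ?_, fun x => rfl⟩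
  by_contra hx₀
  exact mul_ne_zero_of_mem_span hli he hu
    (Submodule.span_mono (Set.image_subset_range _ _) x.2)
    (Submodule.span_mono (Set.image_subset_range _ _) hy)
    (Submodule.coe_eq_zero.not.mpr hx₀) hy₀ (congrArg Subtype.val hx)

theorem exists_mul_eq_mul_ne_zero_of_mem_span [UniqueSums Γ] (hli : LinearIndependent K e)
    (he : ∀ g h, e g * e h = u g h • e (g + h)) (hu : ∀ g h, u g h ≠ 0) (G : AddSubmonoid Γ)
    {α β : A} (hα : α ∈ Submodule.span K (e '' G)) (hβ : β ∈ Submodule.span K (e '' G))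
    (hα₀ : α ≠ 0) (hβ₀ : β ≠ 0) :
    ∃ γ ∈ Submodule.span K (e '' G), ∃ δ ∈ Submodule.span K (e '' G),
      γ * α = δ * β ∧ γ * α ≠ 0 := by
  classical
  obtain ⟨a, haG, rfl⟩ := (Finsupp.mem_span_image_iff_linearCombination K).mp hα
  obtain ⟨b, hbG, rfl⟩ := (Finsupp.mem_span_image_iff_linearCombination K).mp hβ
  set S := a.support ∪ b.support
  have hSG : (S : Set Γ) ⊆ G := by
    simpa [S, Set.union_subset_iff] using ⟨haG, hbG⟩
  have hS : ∀ c : Γ →₀ K, c.support ⊆ S →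
      Finsupp.linearCombination K e c ∈ Submodule.span K (e '' S) := fun c hc =>
    (Finsupp.mem_span_image_iff_linearCombination K).mpr
      ⟨c, (Finsupp.mem_supported K c).mpr hc, rfl⟩
  obtain ⟨m, hm⟩ := S.exists_card_succ_nsmul_lt_two_mul
  obtain ⟨φ, hφ, hφ_apply⟩ := exists_injective_mulRight_span_image hli he hu ↑(m • S)
    (hS a Finset.subset_union_left) hα₀
  obtain ⟨ψ, hψ, hψ_apply⟩ := exists_injective_mulRight_span_image hli he hu ↑(m • S)
    (hS b Finset.subset_union_right) hβ₀
  have : FiniteDimensional K (Submodule.span K (e '' (↑(m • S) + ↑S))) :=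
    FiniteDimensional.span_of_finite K (((m • S).finite_toSet.add S.finite_toSet).image e)
  obtain ⟨x, y, hxy, hx₀⟩ := LinearMap.exists_apply_eq_apply_ne_zero_of_finrank_lt hφ hψ
    (by rwa [← Finset.coe_add, ← succ_nsmul, hli.finrank_span_image_finset,
      hli.finrank_span_image_finset])
  have hG : Submodule.span K (e '' ↑(m • S)) ≤ Submodule.span K (e '' G) :=
    Submodule.span_mono (Set.image_mono (by simpa using AddSubmonoid.nsmul_subset hSG))
  refine ⟨x, hG x.2, y, hG y.2, by rw [← hφ_apply, ← hψ_apply, hxy], ?_⟩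
  rw [← hφ_apply]
  exact Submodule.coe_eq_zero.not.mpr hx₀

end Ore

section Translates

open Metric

variable {E : Type*} [NormedAddCommGroup E] [MeasurableSpace E] [BorelSpace E] [ProperSpace E]
  {μ : Measure E} [μ.IsAddRightInvariant] [μ.IsOpenPosMeasure] [IsFiniteMeasureOnCompacts μ]
  {p : ENNReal}

theorem Finsupp.eq_zero_of_forall_ae_sum_mul_translate_eq_zero (d : E →₀ C(E, ℂ))
    (h : ∀ f : Lp ℂ p μ, ∀ᵐ t ∂μ, (d.sum fun x P => P t * f (t + x)) = 0) : d = 0 := by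
  classical
  ext x₀ q
  obtain ⟨ε, hε, hsep⟩ : ∃ ε > 0, ∀ x ∈ d.support, dist x x₀ < 2 * ε → x = x₀ := by
    obtain ⟨δ, hδ, hball⟩ := Metric.isOpen_iff.mp
      (d.support.erase x₀).finite_toSet.isClosed.isOpen_compl x₀ (by simp)
    refine ⟨δ / 2, by positivity, fun x hx hdist => ?_⟩
    by_contra hne
    exact hball (by rw [mem_ball]; linarith) (by simp [hne, hx])
  -- against the indicator of `B`, only the term `x = x₀` survives near `q`
  set B := ball (q + x₀) ε
  let f : Lp ℂ p μ := indicatorConstLp p (measurableSet_ball (x := q + x₀) (ε := ε))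
    measure_ball_lt_top.ne 1
  have hf : ∀ x, ∀ᵐ t ∂μ, f (t + x) = B.indicator 1 (t + x) := fun x =>
    (measurePreserving_add_right μ x).quasiMeasurePreserving.ae_eq_comp indicatorConstLp_coeFn
  have hzero : d x₀ =ᵐ[μ.restrict (ball q ε)] 0 := by
    rw [Filter.EventuallyEq, ae_restrict_iff' measurableSet_ball]
    filter_upwards [h f, hf x₀, (d.support.eventually_all).mpr fun x _ => hf x]
      with t ht hx₀ hx htq
    rw [Pi.zero_apply, ← ht, Finsupp.sum, Finset.sum_eq_single x₀]
    · rw [hx₀, Set.indicator_of_mem (by rwa [mem_ball, dist_add_right]), Pi.one_apply, mul_one]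
    · intro x hxd hne
      rw [hx x hxd, Set.indicator_of_notMem, mul_zero]
      intro hxB
      refine hne (hsep x hxd ?_)
      rw [mem_ball, dist_eq_norm] at hxB htq
      rw [dist_eq_norm, show x - x₀ = (t + x - (q + x₀)) - (t - q) by abel]
      linarith [norm_sub_le (t + x - (q + x₀)) (t - q)]
    · intro hx₀d
      rw [Finsupp.notMem_support_iff.mp hx₀d]
      simp
  exact Measure.eqOn_open_of_ae_eq hzero isOpen_ball (d x₀).continuous.continuousOn
    continuousOn_const (mem_ball_self hε)

end Translates

def expDot {n : ℕ} (y : RV n) : C(RV n, ℂ) where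
  toFun t := Complex.exp (((2 * Real.pi * dotR y t : ℝ) : ℂ) * Complex.I)
  continuous_toFun := by unfold dotR; fun_prop

lemma expDot_injective {n : ℕ} : Function.Injective (expDot (n := n)) := by
  intro y y' h
  funext i
  by_contra hne
  set s := 1 / (2 * (y i - y' i))
  have hsingle : ∀ z : RV n, dotR z (Pi.single i s) = z i * s := by
    simp [dotR, Pi.single_apply]
  have key := DFunLike.congr_fun h (Pi.single i s)
  simp only [expDot, ContinuousMap.coe_mk, hsingle] at key
  -- at `t = s eᵢ` the two exponents differ by exactly `πi`
  have hπ : Complex.exp (Real.pi * Complex.I)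
      = Complex.exp (((2 * Real.pi * (y i * s) : ℝ) : ℂ) * Complex.I)
        / Complex.exp (((2 * Real.pi * (y' i * s) : ℝ) : ℂ) * Complex.I) := by
    have hd : y i - y' i ≠ 0 := sub_ne_zero.mpr hne
    have hreal : 2 * Real.pi * (y i * s) - 2 * Real.pi * (y' i * s) = Real.pi := by
      simp only [s]
      field_simp
    rw [← Complex.exp_sub, ← sub_mul, ← Complex.ofReal_sub, hreal]
  rw [key, div_self (Complex.exp_ne_zero _), Complex.exp_pi_mul_I] at hπ
  norm_num at hπ

lemma linearIndependent_expDot {n : ℕ} : LinearIndependent ℂ (expDot (n := n)) := by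
  let χ : RV n → Multiplicative (RV n) →* ℂ := fun y =>
    { toFun t := expDot y t.toAdd
      map_one' := by simp [expDot, dotR]
      map_mul' s t := by
        simp only [expDot, ContinuousMap.coe_mk, toAdd_mul, dotR_add_right, ← Complex.exp_add]
        push_cast
        ring_nf }
  have hχ : Function.Injective χ := fun y y' h =>
    expDot_injective (ContinuousMap.ext fun t => DFunLike.congr_fun h (Multiplicative.ofAdd t))
  exact .of_comp (ContinuousMap.coeFnLinearMap ℂ) ((linearIndependent_monoidHom _ ℂ).comp χ hχ)

/-- Grouping by translation part: `∑ c(x,y) π(x,y)` acts as `f ↦ ∑ₓ Pₓ · f(· + x)` with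
`Pₓ = ∑_y c(x,y) e^{2πi y·(·)}`. -/
def tfsSymbol (n : ℕ) : ((RV n × RV n) →₀ ℂ) →ₗ[ℂ] (RV n →₀ C(RV n, ℂ)) :=
  Finsupp.mapRange.linearMap (Finsupp.linearCombination ℂ expDot) ∘ₗ
    (Finsupp.curryLinearEquiv ℂ).toLinearMap

lemma tfsSymbol_injective (n : ℕ) : Function.Injective (tfsSymbol n) :=
  (Finsupp.mapRange_injective _ (map_zero _) linearIndependent_expDot).comp
    (Finsupp.curryLinearEquiv ℂ).injective

lemma linearCombination_TFSp_apply_ae {n : ℕ} (c : (RV n × RV n) →₀ ℂ) (f : L2 n) :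
    ⇑(Finsupp.linearCombination ℂ TFSp c f) =ᵐ[volume]
      fun t => (tfsSymbol n c).sum fun x P => P t * f (t + x) := by
  induction c using Finsupp.induction_linear with
  | zero =>
    filter_upwards with t
    simp
  | add c d hc hd =>
    filter_upwards [Lp.coeFn_add (Finsupp.linearCombination ℂ TFSp c f)
      (Finsupp.linearCombination ℂ TFSp d f), hc, hd] with t h h₁ h₂
    rw [map_add, add_apply, h, Pi.add_apply, h₁, h₂, map_add,
      Finsupp.sum_add_index' (by simp) (by simp [add_mul])]
  | single g a =>
    filter_upwards [Lp.coeFn_smul a (TFSp g f), TFS_coeFn g.1 g.2 f] with t h₁ h₂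
    rw [Finsupp.linearCombination_single, smul_apply, h₁, Pi.smul_apply, TFSp, h₂]
    simp [tfsSymbol, tfsFun, expDot, mul_assoc]

lemma linearIndependent_TFSp_s7 {n : ℕ} : LinearIndependent ℂ (TFSp (n := n)) := by
  refine linearIndependent_iff.mpr fun c hc => tfsSymbol_injective n ?_
  rw [map_zero]
  refine Finsupp.eq_zero_of_forall_ae_sum_mul_translate_eq_zero (μ := volume) (p := 2) _
    fun f => ?_
  filter_upwards [linearCombination_TFSp_apply_ae c f, Lp.coeFn_zero ℂ 2 volume] with t h h₀
  rw [← h, hc]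
  exact h₀

lemma mem_CGalg_iff {n : ℕ} {G : AddSubgroup (RV n × RV n)} {x : L2 n →L[ℂ] L2 n} :
    x ∈ CGalg n G ↔ x ∈ Submodule.span ℂ (TFSp '' G) := by
  rw [CGalg, Submodule.mem_toSubalgebra, spanTFS, Set.image_eq_range]
  rfl

theorem statement7_general (n : ℕ) (G : AddSubgroup (RV n × RV n))
    (I J : Ideal ↥(CGalg n G)) (hI : I ≠ ⊥) (hJ : J ≠ ⊥) :
    I ⊓ J ≠ ⊥ ∧
      ∀ α β : ↥(CGalg n G), α ≠ 0 → β ≠ 0 →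
        ∃ γ δ : ↥(CGalg n G), γ * α = δ * β ∧ γ * α ≠ 0 := by
  have hore : ∀ α β : ↥(CGalg n G), α ≠ 0 → β ≠ 0 →
      ∃ γ δ : ↥(CGalg n G), γ * α = δ * β ∧ γ * α ≠ 0 := by
    intro α β hα hβ
    obtain ⟨γ, hγ, δ, hδ, heq, hne⟩ := exists_mul_eq_mul_ne_zero_of_mem_span
      linearIndependent_TFSp_s7 TFSp_mul (fun _ _ => Complex.exp_ne_zero _) G.toAddSubmonoid
      (mem_CGalg_iff.mp α.2) (mem_CGalg_iff.mp β.2) (by simpa using hα) (by simpa using hβ)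
    exact ⟨⟨γ, mem_CGalg_iff.mpr hγ⟩, ⟨δ, mem_CGalg_iff.mpr hδ⟩, Subtype.ext heq,
      fun h => hne (congrArg Subtype.val h)⟩
  refine ⟨fun hIJ => ?_, hore⟩
  obtain ⟨α, hαI, hα⟩ := Submodule.exists_mem_ne_zero_of_ne_bot hI
  obtain ⟨β, hβJ, hβ⟩ := Submodule.exists_mem_ne_zero_of_ne_bot hJ
  obtain ⟨γ, δ, heq, hne⟩ := hore α β hα hβ
  have hγα : γ * α ∈ I ⊓ J := ⟨I.mul_mem_left γ hαI, heq ▸ J.mul_mem_left δ hβJ⟩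
  rw [hIJ, Submodule.mem_bot] at hγα
  exact hne hγα

/-- For any subgroup `G ≤ ℝ²ⁿ`, nonzero left ideals of `ℂ*G` have nonzero
intersection; in particular `ℂ*G ∖ {0}` satisfies the left Ore condition. -/
theorem statement7 (n : ℕ) (hn : 0 < n) (G : AddSubgroup (RV n × RV n))
    (I J : Ideal ↥(CGalg n G)) (hI : I ≠ ⊥) (hJ : J ≠ ⊥) :
    I ⊓ J ≠ ⊥ ∧
      ∀ α β : ↥(CGalg n G), α ≠ 0 → β ≠ 0 →
        ∃ γ δ : ↥(CGalg n G), γ * α = δ * β ∧ γ * α ≠ 0 :=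
  statement7_general n G I J hI hJ

end
end
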